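/- For every integer t ≥ 1, the sequence c_t(n) = k_t(n)/binom(n,t) is nondecreasing in n: for all n ≥ t, k_t(n)/binom(n,t) ≤ k_t(n+1)/binom(n+1,t). -/

import Mathlib

/-- The number of complete subgraphs of order `t` in `G` (as sets of vertices). -/
noncomputable def cliqueCount {n : ℕ} (G : SimpleGraph (Fin n)) (t : ℕ) : ℕ :=
  {s : Finset (Fin n) | G.IsNClique t s}.ncard

/-- `kt n t` is the minimum of `k_t(G) + k_t(Gᶜ)` over all graphs `G` on `n` vertices,
i.e. the minimum number of monochromatic `K_t`s in a two-colouring of the edges of `K_n`. -/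
noncomputable def kt (n t : ℕ) : ℕ :=
  sInf {m : ℕ | ∃ G : SimpleGraph (Fin n), cliqueCount G t + cliqueCount Gᶜ t = m}

/-- `ctn t n = k_t(n) / binom(n,t)`. -/
noncomputable def ctn (t n : ℕ) : ℝ := (kt n t : ℝ) / (n.choose t : ℝ)

/-!
Delete a vertex `v` from an optimal colouring of `K_{n+1}`: what remains is a colouring of `K_n`,
so at least `k_t(n)` monochromatic `K_t`s avoid `v`. Summing over `v` counts every monochromatic
`K_t` exactly `n + 1 - t` times, whence `(n + 1) k_t(n) ≤ (n + 1 - t) k_t(n + 1)`. This is the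
claim, because `(n + 1 - t) binom(n + 1, t) = (n + 1) binom(n, t)`.
-/

open Finset SimpleGraph

theorem Finset.sum_card_filter_notMem_eq {α : Type*} [Fintype α] [DecidableEq α]
    {B : Finset (Finset α)} {t : ℕ} (hB : ∀ s ∈ B, #s = t) :
    ∑ v, #{s ∈ B | v ∉ s} = (Fintype.card α - t) * #B := by
  have := sum_card_bipartiteAbove_eq_sum_card_bipartiteBelow (fun v s => v ∉ s)
    (s := univ) (t := B)
  simp only [bipartiteAbove, bipartiteBelow] at this
  rw [this, mul_comm, ← smul_eq_mul, ← sum_const]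
  refine sum_congr rfl fun s hs => ?_
  rw [filter_notMem_eq_sdiff, card_univ_sdiff, hB s hs]

theorem SimpleGraph.comap_compl {V W : Type*} {f : V → W} (hf : Function.Injective f)
    (G : SimpleGraph W) : (G.comap f)ᶜ = Gᶜ.comap f := by
  ext
  simp [hf.ne_iff]

theorem SimpleGraph.isNClique_comap_iff {α β : Type*} {G : SimpleGraph β} (f : α ↪ β) {t : ℕ}
    {s : Finset α} : (G.comap f).IsNClique t s ↔ G.IsNClique t (s.map f) := by
  simp [isNClique_iff, isClique_iff, Set.Pairwise]

theorem SimpleGraph.card_cliqueFinset_comap_succAboveEmb {n t : ℕ} (G : SimpleGraph (Fin (n + 1)))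
    [DecidableRel G.Adj] (v : Fin (n + 1)) :
    #((G.comap v.succAboveEmb).cliqueFinset t) = #{s ∈ G.cliqueFinset t | v ∉ s} := by
  rw [← card_map (mapEmbedding v.succAboveEmb).toEmbedding]
  congr 1
  ext s
  simp only [mem_map, mem_cliqueFinset_iff, isNClique_comap_iff, mem_filter,
    RelEmbedding.coe_toEmbedding, mapEmbedding_apply]
  constructor
  · rintro ⟨u, hu, rfl⟩
    exact ⟨hu, by simp [Fin.succAbove_ne]⟩
  · rintro ⟨hs, hv⟩
    have hsub : s ⊆ univ.map v.succAboveEmb := fun x hx => by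
      obtain ⟨y, rfl⟩ := Fin.exists_succAbove_eq (x := x) (y := v) (by rintro rfl; exact hv hx)
      simp
    obtain ⟨u, -, rfl⟩ := subset_map_iff.1 hsub
    exact ⟨u, hs, rfl⟩

theorem cliqueCount_eq_card_cliqueFinset {n : ℕ} (G : SimpleGraph (Fin n)) [DecidableRel G.Adj]
    (t : ℕ) : cliqueCount G t = #(G.cliqueFinset t) := by
  rw [cliqueCount, ← Set.ncard_coe_finset, coe_cliqueFinset]
  rfl

theorem kt_le {n : ℕ} (t : ℕ) (G : SimpleGraph (Fin n)) :
    kt n t ≤ cliqueCount G t + cliqueCount Gᶜ t :=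
  Nat.sInf_le ⟨G, rfl⟩

theorem exists_kt_eq (n t : ℕ) :
    ∃ G : SimpleGraph (Fin n), cliqueCount G t + cliqueCount Gᶜ t = kt n t :=
  Nat.sInf_mem (s := {m | ∃ G : SimpleGraph (Fin n), cliqueCount G t + cliqueCount Gᶜ t = m})
    ⟨_, ⊥, rfl⟩

open Classical in
theorem succ_mul_kt_le (n t : ℕ) : (n + 1) * kt n t ≤ (n + 1 - t) * kt (n + 1) t := by
  obtain ⟨G, hG⟩ := exists_kt_eq (n + 1) t
  have hcard (H : SimpleGraph (Fin (n + 1))) [DecidableRel H.Adj] :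
      ∀ s ∈ H.cliqueFinset t, #s = t := fun _ hs => (mem_cliqueFinset_iff.1 hs).card_eq
  have hdel : ∀ v : Fin (n + 1),
      kt n t ≤ #{s ∈ G.cliqueFinset t | v ∉ s} + #{s ∈ Gᶜ.cliqueFinset t | v ∉ s} := fun v => by
    have := kt_le t (G.comap v.succAboveEmb)
    rwa [comap_compl v.succAboveEmb.injective, cliqueCount_eq_card_cliqueFinset,
      cliqueCount_eq_card_cliqueFinset, card_cliqueFinset_comap_succAboveEmb,
      card_cliqueFinset_comap_succAboveEmb] at this
  calc (n + 1) * kt n t = ∑ _v : Fin (n + 1), kt n t := by simp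
    _ ≤ ∑ v, (#{s ∈ G.cliqueFinset t | v ∉ s} + #{s ∈ Gᶜ.cliqueFinset t | v ∉ s}) :=
        sum_le_sum fun v _ => hdel v
    _ = (n + 1 - t) * kt (n + 1) t := by
        rw [sum_add_distrib, sum_card_filter_notMem_eq (hcard G),
          sum_card_filter_notMem_eq (hcard Gᶜ), Fintype.card_fin, ← mul_add, ← hG,
          cliqueCount_eq_card_cliqueFinset, cliqueCount_eq_card_cliqueFinset]

theorem stmt13_general (t : ℕ) (n : ℕ) (hn : t ≤ n) :
    ctn t n ≤ ctn t (n + 1) := by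
  have hchoose : ∀ {m}, t ≤ m → (0 : ℝ) < m.choose t := fun h => by exact_mod_cast Nat.choose_pos h
  rw [ctn, ctn, div_le_div_iff₀ (hchoose hn) (hchoose (hn.trans n.le_succ))]
  have hgap : 0 < n + 1 - t := by omega
  suffices kt n t * (n + 1).choose t ≤ kt (n + 1) t * n.choose t by exact_mod_cast this
  refine Nat.le_of_mul_le_mul_right ?_ hgap
  calc kt n t * (n + 1).choose t * (n + 1 - t)
      = (n + 1) * kt n t * n.choose t := by rw [mul_assoc, ← Nat.choose_mul_succ_eq]; ring
    _ ≤ (n + 1 - t) * kt (n + 1) t * n.choose t := Nat.mul_le_mul_right _ (succ_mul_kt_le n t)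
    _ = kt (n + 1) t * n.choose t * (n + 1 - t) := by ring

/-- The sequence `c_t(n) = k_t(n)/binom(n,t)` is nondecreasing in `n` for `n ≥ t`. -/
theorem stmt13 (t : ℕ) (ht : 1 ≤ t) (n : ℕ) (hn : t ≤ n) :
    ctn t n ≤ ctn t (n + 1) :=
  stmt13_general t n hn
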